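/- arXiv:1610.08026 — 4 statements merged into one kernel-verified Lean document; each statement's English description precedes it below -/
import Mathlib

section
/- Under the interference-alignment hypotheses, the k(r−1) + 1 matrices consisting of the identity matrix I together with the encoding matrices C_{u,i} for u ∈ {2,…,r} and i ∈ {1,…,k} form a linearly independent family in the 𝔽-vector space of l × l matrices over 𝔽. -/
/-!
Take a relation `a • 1 + ∑ c_{u,i} • C_{u,i} = 0` and multiply it on the left by `S_j`. Since
`C_{1,j} = 1`, alignment puts the rows of `S_j`, and of every `S_j * C_{u,i}` with `i ≠ j`, in the
row space of `S_j * C_{1,j}`; the rows of `S_j * C_{u,j}` lie in the row space of `S_j * C_{u,j}`.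
These row spaces are independent, so `c_{u,j} • (S_j * C_{u,j}) = 0`, and `S_j * C_{u,j} ≠ 0`
because the row spaces of the `S_j * C_{u,j}` exhaust `𝔽^l` and `C_{u,j}` is invertible.
What is left of the relation is `a • 1 = 0`.
-/

open Submodule Set

theorem iSupIndep.eq_zero_of_sum_eq_zero {R M ι κ : Type*} [Ring R] [AddCommGroup M]
    [Module R M] [Fintype κ] {W : ι → Submodule R M} (hW : iSupIndep W) {φ : κ → ι}
    {f : κ → M} (hf : ∀ x, f x ∈ W (φ x)) (hsum : ∑ x, f x = 0) {x₀ : κ}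
    (hx₀ : ∀ x, φ x = φ x₀ → x = x₀) : f x₀ = 0 := by
  classical
  have hrest : ∑ x ∈ Finset.univ.erase x₀, f x ∈ ⨆ (i) (_ : i ≠ φ x₀), W i := by
    refine sum_mem fun x hx => le_biSup W (fun h => ?_) (hf x)
    exact Finset.ne_of_mem_erase hx (hx₀ x h)
  have hneg : f x₀ = -∑ x ∈ Finset.univ.erase x₀, f x :=
    eq_neg_of_add_eq_zero_left ((Finset.add_sum_erase _ f (Finset.mem_univ x₀)).trans hsum)
  exact disjoint_def.mp (hW (φ x₀)) _ (hf x₀) (hneg ▸ neg_mem hrest)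

namespace Matrix

variable {K m n ι κ : Type*} [Field K] [Fintype n]

theorem coeff_eq_zero_of_rows_mul_mem_iSupIndep [Fintype κ] {S : Matrix m n K}
    {A : κ → Matrix n n K} {W : ι → Submodule K (n → K)} (hW : iSupIndep W) {φ : κ → ι}
    (hA : ∀ x v, (S * A x) v ∈ W (φ x)) {x₀ : κ} (hx₀ : ∀ x, φ x = φ x₀ → x = x₀)
    (hne : S * A x₀ ≠ 0) {g : κ → K} (hg : ∑ x, g x • A x = 0) : g x₀ = 0 := by
  have hmul : ∑ x, g x • (S * A x) = 0 := by
    simp only [← Matrix.mul_smul, ← Matrix.mul_sum, hg, Matrix.mul_zero]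
  have hrow : ∀ v, g x₀ • (S * A x₀) v = 0 := fun v =>
    hW.eq_zero_of_sum_eq_zero (f := fun x => g x • (S * A x) v)
      (fun x => smul_mem _ _ (hA x v))
      ((Finset.sum_apply v Finset.univ _).symm.trans (congrFun hmul v)) hx₀
  exact (smul_eq_zero.mp (funext hrow)).resolve_right hne

theorem mul_ne_zero_of_iSup_span_eq_top [DecidableEq n] [Nonempty n] {S : Matrix m n K}
    {C : ι → Matrix n n K} (htop : ⨆ u, span K (range (S * C u)) = ⊤) {u : ι}
    (hC : IsUnit (C u)) : S * C u ≠ 0 := by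
  intro h
  have hS : S = 0 := by
    simpa [h] using (mul_nonsing_inv_cancel_right (C u) S ((C u).isUnit_iff_isUnit_det.mp hC)).symm
  have hbot : ∀ u', span K (range (S * C u')) = ⊥ := fun u' =>
    span_eq_bot.mpr (by rintro _ ⟨v, rfl⟩; rw [hS, Matrix.zero_mul]; rfl)
  simp [hbot] at htop

end Matrix

theorem linearIndependent_elim_one_of_interferenceAlignment {K m n ι κ : Type*} [Field K] [Fintype ι]
    [Fintype κ] [Fintype n] [DecidableEq n] [Nonempty n]
    (S : κ → Matrix m n K) (C : ι → κ → Matrix n n K) (u₀ : ι) (p : ι → Prop) (hp : ¬ p u₀)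
    (hC : ∀ u j, IsUnit (C u j)) (hC₀ : ∀ j, C u₀ j = 1)
    (hIA1 : ∀ i j, j ≠ i → ∀ u, span K (range (S i * C u j)) = span K (range (S i)))
    (hIA2 : ∀ i, iSupIndep fun u => span K (range (S i * C u i)))
    (hIA3 : ∀ i, ⨆ u, span K (range (S i * C u i)) = ⊤) :
    LinearIndependent K (fun x : Option ({u // p u} × κ) => x.elim 1 fun q => C q.1.1 q.2) := by
  classical
  have hrowSpace : ∀ j, span K (range (S j)) = span K (range (S j * C u₀ j)) := fun j => by
    rw [hC₀, Matrix.mul_one]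
  rw [Fintype.linearIndependent_iff]
  intro g hg
  have hcoeff : ∀ u j, g (some (u, j)) = 0 := by
    intro u j
    -- `φ x` is the index of the row space containing the rows of `S j` times the `x`-th matrix
    let φ : Option ({u // p u} × κ) → ι := fun x => x.elim u₀ fun q => if q.2 = j then q.1 else u₀
    refine Matrix.coeff_eq_zero_of_rows_mul_mem_iSupIndep (hIA2 j) (φ := φ) ?_ ?_
      (Matrix.mul_ne_zero_of_iSup_span_eq_top (hIA3 j) (hC u j)) hg
    · rintro (_ | ⟨u', i⟩) v
      · show (S j * (1 : Matrix n n K)) v ∈ span K (range (S j * C u₀ j))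
        rw [Matrix.mul_one, ← hrowSpace]
        exact subset_span (mem_range_self v)
      · by_cases hi : i = j
        · subst hi
          simpa [φ] using subset_span (R := K) (mem_range_self v)
        · simp only [φ, Option.elim, if_neg hi, ← hrowSpace, ← hIA1 j i hi u']
          exact subset_span (mem_range_self v)
    · rintro (_ | ⟨u', i⟩) h <;> simp only [φ, Option.elim, if_true] at h
      · exact absurd (h ▸ u.2) hp
      · split_ifs at h with hi
        · rw [hi, Subtype.ext h]
        · exact absurd (h ▸ u.2) hp
  rintro (_ | ⟨u, j⟩)
  · simpa [hcoeff] using hg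
  · exact hcoeff u j

theorem stmt_3 {𝔽 : Type*} [Field 𝔽] (k r l : ℕ)
    (hr : 2 ≤ r) (hl : 0 < l)
    (S : Fin k → Matrix (Fin (l / r)) (Fin l) 𝔽)
    (C : Fin r → Fin k → Matrix (Fin l) (Fin l) 𝔽)
    (hCinv : ∀ u j, IsUnit (C u j))
    (hC1 : ∀ j, C ⟨0, by omega⟩ j = 1)
    (hIA1 : ∀ (i j : Fin k), j ≠ i → ∀ u : Fin r,
      Submodule.span 𝔽 (Set.range (S i * C u j)) = Submodule.span 𝔽 (Set.range (S i)))
    (hIA2 : ∀ i : Fin k, iSupIndep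
      fun u : Fin r => Submodule.span 𝔽 (Set.range (S i * C u i)))
    (hIA3 : ∀ i : Fin k,
      (⨆ u : Fin r, Submodule.span 𝔽 (Set.range (S i * C u i))) = ⊤)
    :
    LinearIndependent 𝔽
      (fun x : Option ({u : Fin r // (u : ℕ) ≠ 0} × Fin k) =>
        x.elim (1 : Matrix (Fin l) (Fin l) 𝔽) (fun p => C p.1.1 p.2)) := by
  have : Nonempty (Fin l) := ⟨⟨0, hl⟩⟩
  exact linearIndependent_elim_one_of_interferenceAlignment S C ⟨0, by omega⟩ (fun u => (u : ℕ) ≠ 0)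
    (fun h => h rfl) hCinv hC1 hIA1 hIA2 hIA3
end

section
/- Under the interference-alignment hypotheses, if l = r (the scalar MSR scenario with independent repair subspaces), then k ≤ r + 1. -/
/-!
For `l = r` each repair matrix is a single row `v i`. Hypothesis (i) makes `v i` a left eigenvector
of every `C u j` with `j ≠ i`, and (ii) says that the `v i * C u i` span `𝔽^l` while
`v i * C 1 i` is not a multiple of `v i`. If `v i` lies in the span `W` of some `v m` with `m ≠ i`,
then `W` is invariant under every `C u i`, so it contains all `v i * C u i` and `W = 𝔽^l`.
Now let `k ≥ l + 2`, fix `j`, and take a linear dependency of minimal support among the `l + 1` or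
more vectors `v m`, `m ≠ j`. These are eigenvectors of `C 1 j`, and minimality forces a common
eigenvalue `c` on the support. The support spans `𝔽^l` by the previous remark, so `C 1 j = c • 1`,
contradicting that `v j` is not an eigenvector of `C 1 j`.
-/

open Module Submodule Function

theorem span_range_eq_span_singleton_of_subsingleton {K V ι : Type*} [Semiring K]
    [AddCommMonoid V] [Module K V] [Subsingleton ι] (f : ι → V) (x : ι) :
    span K (Set.range f) = K ∙ f x := by
  have : Nonempty ι := ⟨x⟩
  rw [Set.range_eq_singleton fun y => congrArg f (Subsingleton.elim y x)]

section Dependencies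

variable {K V ι : Type*} [Field K] [AddCommGroup V] [Module K V] [Fintype ι]

theorem exists_minimalFor_support_of_not_linearIndependent {v : ι → V}
    (hv : ¬ LinearIndependent K v) :
    ∃ g : ι → K, MinimalFor (fun g => g ≠ 0 ∧ ∑ i, g i • v i = 0) support g := by
  obtain ⟨g, hg, i, hi⟩ := Fintype.not_linearIndependent_iff.mp hv
  exact exists_minimalFor_of_wellFoundedLT _ _ ⟨g, Function.ne_iff.mpr ⟨i, hi⟩, hg⟩

theorem mem_span_image_support_diff_of_sum_smul_eq_zero {v : ι → V} {g : ι → K}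
    (hg : ∑ i, g i • v i = 0) {a : ι} (ha : g a ≠ 0) :
    v a ∈ span K (v '' (support g \ {a})) := by
  classical
  rw [← Finset.add_sum_erase _ _ (Finset.mem_univ a), add_eq_zero_iff_eq_neg] at hg
  rw [← smul_mem_iff _ ha, hg]
  refine neg_mem (sum_mem fun i hi => ?_)
  by_cases hgi : g i = 0
  · simp [hgi]
  · exact smul_mem _ _ (subset_span ⟨i, ⟨hgi, Finset.ne_of_mem_erase hi⟩, rfl⟩)

theorem exists_forall_apply_eq_smul_of_minimalFor {v : ι → V} {f : End K V}
    (hv : ∀ i, ∃ μ : K, f (v i) = μ • v i) {g : ι → K}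
    (hg : MinimalFor (fun g => g ≠ 0 ∧ ∑ i, g i • v i = 0) support g) :
    ∃ c : K, ∀ i, g i ≠ 0 → f (v i) = c • v i := by
  choose μ hμ using hv
  obtain ⟨⟨hg0, hgsum⟩, hmin⟩ := hg
  obtain ⟨a, ha⟩ := Function.ne_iff.mp hg0
  refine ⟨μ a, fun i hi => ?_⟩
  -- `g'` is again a dependency, and it vanishes at `a`, so minimality of `g` kills it.
  set g' : ι → K := fun i => g i * (μ i - μ a)
  have hsum : ∑ i, g' i • v i = 0 := calc
    ∑ i, g' i • v i = f (∑ i, g i • v i) - μ a • ∑ i, g i • v i := by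
      simp only [g', map_sum, map_smul, hμ, Finset.smul_sum, smul_smul, ← Finset.sum_sub_distrib,
        ← sub_smul, mul_sub, mul_comm]
    _ = 0 := by simp [hgsum]
  have hsupp : support g' ⊆ support g := fun i hi => left_ne_zero_of_mul hi
  have hg' : g' = 0 := by
    by_contra hne
    have := hmin ⟨hne, hsum⟩ hsupp ha
    simp [g'] at this
  have := congrFun hg' i
  simp only [g', Pi.zero_apply, mul_eq_zero, sub_eq_zero, hi, false_or] at this
  rw [hμ, this]

end Dependencies

section Alignment

variable {K V ι κ : Type*} [Field K] [AddCommGroup V] [Module K V]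
  {v : ι → V} {F : κ → ι → End K V}

theorem span_image_eq_top_of_mem_span_image
    (halign : ∀ i j, j ≠ i → ∀ u, ∃ μ : K, F u j (v i) = μ • v i)
    (hspan : ∀ i, ⨆ u, K ∙ F u i (v i) = ⊤) {i : ι} {B : Set ι} (hiB : i ∉ B)
    (hi : v i ∈ span K (v '' B)) :
    span K (v '' B) = ⊤ := by
  have hinv : ∀ u, span K (v '' B) ≤ (span K (v '' B)).comap (F u i) := fun u => by
    refine span_le.mpr ?_
    rintro _ ⟨m, hm, rfl⟩
    obtain ⟨μ, hμ⟩ := halign m i (ne_of_mem_of_not_mem hm hiB).symm u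
    rw [SetLike.mem_coe, mem_comap, hμ]
    exact smul_mem _ _ (subset_span ⟨m, hm, rfl⟩)
  rw [eq_top_iff, ← hspan i]
  exact iSup_le fun u => (span_singleton_le_iff_mem _ _).mpr (hinv u hi)

theorem apply_ne_smul_self_of_iSupIndep [Nontrivial V] {u₀ u₁ : κ} (hu : u₀ ≠ u₁)
    (hF₀ : ∀ i, F u₀ i = 1) (hinj : ∀ u i, Injective (F u i))
    (hind : ∀ i, iSupIndep fun u => K ∙ F u i (v i)) (hspan : ∀ i, ⨆ u, K ∙ F u i (v i) = ⊤)
    (i : ι) (μ : K) :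
    F u₁ i (v i) ≠ μ • v i := by
  intro h
  have hv : v i ≠ 0 := by
    intro hv
    have := hspan i
    simp only [hv, map_zero, span_zero_singleton, iSup_bot] at this
    exact bot_ne_top this
  have hdisj : Disjoint (K ∙ v i) (K ∙ F u₁ i (v i)) := by
    simpa only [onFun, hF₀, End.one_apply] using (hind i).pairwiseDisjoint hu
  have hzero : F u₁ i (v i) = 0 := (disjoint_def.mp hdisj) _
    (h ▸ smul_mem _ _ (mem_span_singleton_self _)) (mem_span_singleton_self _)
  exact hv ((injective_iff_map_eq_zero _).mp (hinj u₁ i) _ hzero)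

theorem card_le_finrank_add_one_of_exists_apply_ne_smul [Fintype ι] [FiniteDimensional K V]
    (halign : ∀ i j, j ≠ i → ∀ u, ∃ μ : K, F u j (v i) = μ • v i)
    (hspan : ∀ i, ⨆ u, K ∙ F u i (v i) = ⊤)
    (hnot : ∀ i, ∃ u, ∀ μ : K, F u i (v i) ≠ μ • v i) :
    Fintype.card ι ≤ finrank K V + 1 := by
  classical
  by_contra! hcard
  obtain ⟨j⟩ : Nonempty ι := Fintype.card_pos_iff.mp (by omega)
  obtain ⟨u, hu⟩ := hnot j
  set w : {m // m ≠ j} → V := fun m => v m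
  have hw : ¬ LinearIndependent K w := fun h => by
    have := h.fintype_card_le_finrank
    simp only [Fintype.card_subtype_compl, Fintype.card_unique] at this
    omega
  obtain ⟨g, hg⟩ := exists_minimalFor_support_of_not_linearIndependent hw
  obtain ⟨c, hc⟩ := exists_forall_apply_eq_smul_of_minimalFor (v := w)
    (fun m => halign m j m.2.symm u) hg
  obtain ⟨a, ha⟩ := Function.ne_iff.mp hg.prop.1
  set B : Set ι := Subtype.val '' (support g \ {a})
  have hB : span K (v '' B) = ⊤ := by
    refine span_image_eq_top_of_mem_span_image halign hspan (i := a) ?_ ?_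
    · rintro ⟨m, hm, hma⟩
      exact hm.2 (Subtype.ext hma)
    · rw [← Set.image_comp]
      exact mem_span_image_support_diff_of_sum_smul_eq_zero hg.prop.2 ha
  have hB_le : span K (v '' B) ≤ (F u j).eigenspace c := by
    refine span_le.mpr ?_
    rintro _ ⟨_, ⟨m, hm, rfl⟩, rfl⟩
    exact End.mem_eigenspace_iff.mpr (hc m hm.1)
  exact hu c (End.mem_eigenspace_iff.mp (hB_le (hB ▸ mem_top)))

theorem card_le_finrank_add_one_of_iSupIndep [Fintype ι] [FiniteDimensional K V] [Nontrivial V]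
    {u₀ u₁ : κ} (hu : u₀ ≠ u₁) (hF₀ : ∀ i, F u₀ i = 1) (hinj : ∀ u i, Injective (F u i))
    (halign : ∀ i j, j ≠ i → ∀ u, ∃ μ : K, F u j (v i) = μ • v i)
    (hind : ∀ i, iSupIndep fun u => K ∙ F u i (v i)) (hspan : ∀ i, ⨆ u, K ∙ F u i (v i) = ⊤) :
    Fintype.card ι ≤ finrank K V + 1 :=
  card_le_finrank_add_one_of_exists_apply_ne_smul halign hspan fun i =>
    ⟨u₁, apply_ne_smul_self_of_iSupIndep hu hF₀ hinj hind hspan i⟩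

end Alignment

theorem stmt_5 {𝔽 : Type*} [Field 𝔽] (k r l : ℕ)
    (hr : 2 ≤ r)
    (S : Fin k → Matrix (Fin (l / r)) (Fin l) 𝔽)
    (C : Fin r → Fin k → Matrix (Fin l) (Fin l) 𝔽)
    (hCinv : ∀ u j, IsUnit (C u j))
    (hC1 : ∀ j, C ⟨0, by omega⟩ j = 1)
    (hIA1 : ∀ (i j : Fin k), j ≠ i → ∀ u : Fin r,
      Submodule.span 𝔽 (Set.range (S i * C u j)) = Submodule.span 𝔽 (Set.range (S i)))
    (hIA2 : ∀ i : Fin k, iSupIndep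
      fun u : Fin r => Submodule.span 𝔽 (Set.range (S i * C u i)))
    (hIA3 : ∀ i : Fin k,
      (⨆ u : Fin r, Submodule.span 𝔽 (Set.range (S i * C u i))) = ⊤)
    (hlr : l = r) :
    k ≤ r + 1 := by
  subst hlr
  have hl : 0 < l := by omega
  have : NeZero l := ⟨hl.ne'⟩
  have : Subsingleton (Fin (l / l)) := Fin.subsingleton_iff_le_one.mpr (Nat.div_self hl).le
  let x : Fin (l / l) := ⟨0, by rw [Nat.div_self hl]; exact one_pos⟩
  let v : Fin k → Fin l → 𝔽 := fun i => S i x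
  let F : Fin l → Fin k → End 𝔽 (Fin l → 𝔽) := fun u j => (C u j).vecMulLinear
  have hrow : ∀ i u j, span 𝔽 (Set.range (S i * C u j)) = 𝔽 ∙ F u j (v i) := fun i u j =>
    span_range_eq_span_singleton_of_subsingleton _ x
  have hS : ∀ i, span 𝔽 (Set.range (S i)) = 𝔽 ∙ v i := fun i =>
    span_range_eq_span_singleton_of_subsingleton (S i) x
  have halign : ∀ i j, j ≠ i → ∀ u, ∃ μ : 𝔽, F u j (v i) = μ • v i := fun i j hji u => by
    have h : F u j (v i) ∈ 𝔽 ∙ v i := by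
      rw [← hS, ← hIA1 i j hji u, hrow]
      exact mem_span_singleton_self _
    obtain ⟨μ, hμ⟩ := mem_span_singleton.mp h
    exact ⟨μ, hμ.symm⟩
  have hspan : ∀ i, ⨆ u, 𝔽 ∙ F u i (v i) = ⊤ := fun i => by simpa only [hrow] using hIA3 i
  have hind : ∀ i, iSupIndep fun u => 𝔽 ∙ F u i (v i) := fun i => by
    simpa only [hrow] using hIA2 i
  have hF₀ : ∀ j, F ⟨0, hl⟩ j = 1 := fun j => LinearMap.ext fun w => by
    simp only [F, hC1, Matrix.vecMulLinear_apply, Matrix.vecMul_one, End.one_apply]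
  simpa using card_le_finrank_add_one_of_iSupIndep (u₁ := ⟨1, hr⟩) (by simp [Fin.ext_iff]) hF₀
    (fun u j _ _ h => Matrix.vecMul_injective_iff_isUnit.mpr (hCinv u j) h) halign hind hspan
end

section
/- Under the interference-alignment hypotheses, let λ be a positive integer with λ ≤ k such that every subset T ⊆ {1,…,k} with |T| = λ satisfies Σ_{i∈T} rowSpace(S_i) = 𝔽^l. Then r^{⌈k/λ⌉} ≤ l²; consequently k ≤ 2λ · log_r(l). -/
/-!
For a set `N` of systematic nodes let `B N` be the space of endomorphisms of `𝔽^l` that preserve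
every repair space `W i = rowSpace (S i)`, `i ∈ N`; thus `dim B ∅ = l²`. If `G` is disjoint from
`N` and the `W j`, `j ∈ G`, span `𝔽^l`, then `r · dim B (N ∪ G) ≤ dim B N`: the maps
`X ↦ C_{u,j} ∘ X` (`j ∈ G`, `u ≥ 2`) send `B (N ∪ G)` into `B N` by (i), and because of the direct
sum `𝔽^l = ⨁_u W j · C_{u,j}` from (ii), the only linear relations between `B (N ∪ G)` and these
images come from endomorphisms killing `W j`. The endomorphisms killing all `W j`, `j ∈ G`, are
zero, and counting dimensions gives the factor `r`. Splitting off `⌈k/λ⌉ - 1` blocks of `λ` nodes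
and noting that, for any node `j` left over, the `r` maps `v ↦ v · C_{u,j}` are linearly
independent elements of the remaining `B N`, gives `r ^ ⌈k/λ⌉ ≤ l²`.
-/

open Module Submodule

section Finrank

variable {K E : Type*} [Field K] [AddCommGroup E] [Module K E] [FiniteDimensional K E]

theorem finrank_add_card_mul_le_of_relations {ι : Type*} [Fintype ι] {B A : Submodule K E}
    {Z : ι → Submodule K E} (f : ι → E →ₗ[K] E) (hBA : B ≤ A) (hfA : ∀ p, B.map (f p) ≤ A)
    (hrel : ∀ X₀ ∈ B, ∀ X : ι → E, (∀ p, X p ∈ B) → X₀ + ∑ p, f p (X p) = 0 →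
      ∀ p, X p ∈ Z p) :
    finrank K B + Fintype.card ι * finrank K B ≤ finrank K A + ∑ p, finrank K (Z p) := by
  let F : (B × (ι → B)) →ₗ[K] E :=
    B.subtype.coprod (∑ p, f p ∘ₗ B.subtype ∘ₗ LinearMap.proj p)
  have hF : ∀ x, F x = x.1 + ∑ p, f p (x.2 p) := fun x => by simp [F]
  have hrange : finrank K (LinearMap.range F) ≤ finrank K A := by
    refine Submodule.finrank_mono ?_
    rintro _ ⟨x, rfl⟩
    rw [hF]
    exact add_mem (hBA x.1.2) (sum_mem fun p _ => hfA p (mem_map_of_mem (x.2 p).2))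
  -- an element of `ker F` is determined by its `ι`-components, which lie in `Z`
  let g : LinearMap.ker F →ₗ[K] ∀ p, Z p := LinearMap.pi fun p =>
    LinearMap.codRestrict (Z p)
      ((B.subtype ∘ₗ LinearMap.proj (φ := fun _ : ι => B) p) ∘ₗ LinearMap.snd K B (ι → B) ∘ₗ
        (LinearMap.ker F).subtype) fun x =>
      hrel _ x.1.1.2 _ (fun q => (x.1.2 q).2) ((hF x.1).symm.trans x.2) p
  have hg : Function.Injective g := by
    rw [injective_iff_map_eq_zero]
    rintro ⟨⟨X₀, X⟩, hx⟩ hgx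
    have hX : X = 0 := funext fun p => Subtype.ext (congrArg Subtype.val (congrFun hgx p) :)
    subst hX
    have hX₀ : (X₀ : E) = 0 := by simpa [hF] using hx
    exact Subtype.ext (Prod.ext (Subtype.ext hX₀) rfl)
  have hker := LinearMap.finrank_le_finrank_of_injective hg
  have hrank := LinearMap.finrank_range_add_finrank_ker F
  rw [finrank_prod, finrank_pi_fintype] at hrank
  rw [finrank_pi_fintype] at hker
  simp only [Finset.sum_const, Finset.card_univ, smul_eq_mul] at hrank
  omega

theorem sum_finrank_add_finrank_le {ι : Type*} (s : Finset ι) (B : Submodule K E)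
    (Z : ι → Submodule K E) (hZB : ∀ j ∈ s, Z j ≤ B) :
    ∑ j ∈ s, finrank K (Z j) + finrank K B ≤ s.card * finrank K B + finrank K ↥(B ⊓ s.inf Z) := by
  induction s using Finset.cons_induction with
  | empty => rw [Finset.inf_empty, inf_top_eq]; simp
  | cons a s ha ih =>
    have hsup : finrank K ↥(Z a ⊔ (B ⊓ s.inf Z)) ≤ finrank K B :=
      finrank_mono (sup_le (hZB a (Finset.mem_cons_self a s)) inf_le_left)
    have := finrank_sup_add_finrank_inf_eq (Z a) (B ⊓ s.inf Z)
    have := ih fun j hj => hZB j (Finset.mem_cons_of_mem hj)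
    rw [Finset.sum_cons, Finset.card_cons, Finset.inf_cons, inf_left_comm]
    nlinarith

end Finrank

section InterferenceAlignment

variable {K V κ ρ : Type*} [Field K] [AddCommGroup V] [Module K V]

def invariantEnds (W : κ → Submodule K V) (N : Finset κ) : Submodule K (Module.End K V) :=
  ⨅ i ∈ N, compatibleMaps (W i) (W i)

variable {W : κ → Submodule K V}

theorem mem_invariantEnds {N : Finset κ} {X : Module.End K V} :
    X ∈ invariantEnds W N ↔ ∀ i ∈ N, ∀ v ∈ W i, X v ∈ W i := by
  simp [invariantEnds, compatibleMaps, SetLike.le_def]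

theorem invariantEnds_anti {N N' : Finset κ} (h : N ⊆ N') :
    invariantEnds W N' ≤ invariantEnds W N := fun _ hX =>
  mem_invariantEnds.2 fun i hi => mem_invariantEnds.1 hX i (h hi)

theorem mul_mem_invariantEnds {N : Finset κ} {X Y : Module.End K V}
    (hX : X ∈ invariantEnds W N) (hY : Y ∈ invariantEnds W N) : X * Y ∈ invariantEnds W N :=
  mem_invariantEnds.2 fun i hi v hv =>
    mem_invariantEnds.1 hX i hi _ (mem_invariantEnds.1 hY i hi v hv)

theorem finset_inf_compatibleMaps_bot_eq_bot {G : Finset κ} (hG : ⨆ j ∈ G, W j = ⊤) :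
    G.inf (fun j => compatibleMaps (W j) (⊥ : Submodule K V)) = ⊥ := by
  refine eq_bot_iff.2 fun X hX => (Submodule.mem_bot K).2 ?_
  have hker : ⨆ j ∈ G, W j ≤ LinearMap.ker X :=
    iSup₂_le fun j hj => Finset.inf_le (f := fun j => compatibleMaps (W j) ⊥) hj hX
  rwa [hG, top_le_iff, LinearMap.ker_eq_top] at hker

/-- `W i` stands for `rowSpace (S i)`, `φ u j` for `v ↦ v * C u j`, and `u₀` for the index with
`C u₀ j = 1`. -/
structure IsInterferenceAligned (W : κ → Submodule K V) (φ : ρ → κ → Module.End K V) (u₀ : ρ) :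
    Prop where
  injective : ∀ u j, Function.Injective (φ u j)
  base_eq_one : ∀ j, φ u₀ j = 1
  map_le_of_ne : ∀ i j, j ≠ i → ∀ u, (W i).map (φ u j) ≤ W i
  iSupIndep_map : ∀ i, iSupIndep fun u => (W i).map (φ u i)

namespace IsInterferenceAligned

variable {φ : ρ → κ → Module.End K V} {u₀ : ρ}

theorem apply_mem_invariantEnds (h : IsInterferenceAligned W φ u₀) {N : Finset κ} {j : κ}
    (hj : j ∉ N) (u : ρ) : φ u j ∈ invariantEnds W N :=
  mem_invariantEnds.2 fun i hi _ hv =>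
    h.map_le_of_ne i j (ne_of_mem_of_not_mem hi hj).symm u (mem_map_of_mem hv)

theorem mem_iSup_map_ne_of_mem (h : IsInterferenceAligned W φ u₀) {j : κ} {u : ρ}
    (hu : u ≠ u₀) {y : V} (hy : y ∈ W j) : y ∈ ⨆ (u' : ρ) (_ : u' ≠ u), (W j).map (φ u' j) :=
  mem_iSup_of_mem u₀ <| mem_iSup_of_mem (Ne.symm hu) <| by
    rwa [h.base_eq_one, Module.End.one_eq_id, map_id]

theorem apply_mem_iSup_map_ne (h : IsInterferenceAligned W φ u₀) {j j' : κ} {u u' : ρ}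
    (hu : u ≠ u₀) (hne : (j', u') ≠ (j, u)) {y : V} (hy : y ∈ W j) :
    φ u' j' y ∈ ⨆ (u'' : ρ) (_ : u'' ≠ u), (W j).map (φ u'' j) := by
  by_cases hj : j' = j
  · subst hj
    have hu' : u' ≠ u := fun h' => hne (by rw [h'])
    exact mem_iSup_of_mem u' (mem_iSup_of_mem hu' (mem_map_of_mem hy))
  · exact h.mem_iSup_map_ne_of_mem hu (h.map_le_of_ne j j' hj u' (mem_map_of_mem hy))

theorem mem_compatibleMaps_bot_of_add_sum_eq_zero [Fintype ρ] [DecidableEq ρ]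
    (h : IsInterferenceAligned W φ u₀) {G : Finset κ} {X₀ : Module.End K V}
    (hX₀ : X₀ ∈ invariantEnds W G) {X : G × {u // u ≠ u₀} → Module.End K V}
    (hX : ∀ p, X p ∈ invariantEnds W G) (hsum : X₀ + ∑ p, φ p.2 p.1 * X p = 0)
    (p : G × {u // u ≠ u₀}) : X p ∈ compatibleMaps (W p.1) (⊥ : Submodule K V) := by
  classical
  obtain ⟨⟨j, hj⟩, ⟨u, hu⟩⟩ := p
  intro v hv
  set p : G × {u // u ≠ u₀} := (⟨j, hj⟩, ⟨u, hu⟩)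
  have hsumv : X₀ v + (φ u j (X p v) + ∑ q ∈ Finset.univ.erase p, φ q.2 q.1 (X q v)) = 0 := by
    rw [← Finset.add_sum_erase _ _ (Finset.mem_univ p)] at hsum
    simpa only [LinearMap.add_apply, LinearMap.sum_apply, Module.End.mul_apply,
      LinearMap.zero_apply] using congrArg (fun Y : Module.End K V => Y v) hsum
  set y := φ u j (X p v)
  -- `y` lies in the `u`-th summand of `⨁_u' (W j).map (φ u' j)`, and by the relation `hsumv`
  -- also in the sum of the other summands
  have hy : y ∈ (W j).map (φ u j) := mem_map_of_mem (mem_invariantEnds.1 (hX p) j hj v hv)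
  have hrest : y ∈ ⨆ (u' : ρ) (_ : u' ≠ u), (W j).map (φ u' j) := by
    have hneg : y = -(X₀ v + ∑ q ∈ Finset.univ.erase p, φ q.2 q.1 (X q v)) := by
      rw [eq_neg_iff_add_eq_zero, ← hsumv]
      abel
    rw [hneg]
    refine neg_mem (add_mem (h.mem_iSup_map_ne_of_mem hu (mem_invariantEnds.1 hX₀ j hj v hv))
      (sum_mem fun q hq => h.apply_mem_iSup_map_ne hu ?_ (mem_invariantEnds.1 (hX q) j hj v hv)))
    intro heq
    obtain ⟨hqj, hqu⟩ := Prod.mk.inj heq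
    exact Finset.ne_of_mem_erase hq (Prod.ext (Subtype.ext hqj) (Subtype.ext hqu))
  have hy0 : y = 0 := disjoint_def.1 (h.iSupIndep_map j u) y hy hrest
  simpa [mem_comap] using (map_eq_zero_iff _ (h.injective u j)).1 hy0

theorem card_mul_finrank_invariantEnds_union_le [Fintype ρ] [DecidableEq κ] [FiniteDimensional K V]
    (h : IsInterferenceAligned W φ u₀) {N G : Finset κ} (hNG : Disjoint N G)
    (hG : ⨆ j ∈ G, W j = ⊤) :
    Fintype.card ρ * finrank K (invariantEnds W (N ∪ G)) ≤ finrank K (invariantEnds W N) := by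
  classical
  set B := invariantEnds W (N ∪ G)
  set Z : κ → Submodule K (Module.End K V) := fun j => B ⊓ compatibleMaps (W j) ⊥
  have hBN : B ≤ invariantEnds W N := invariantEnds_anti Finset.subset_union_left
  have hBG : B ≤ invariantEnds W G := invariantEnds_anti Finset.subset_union_right
  have hrel := finrank_add_card_mul_le_of_relations (B := B) (A := invariantEnds W N)
    (Z := fun p : G × {u // u ≠ u₀} => Z p.1) (fun p => LinearMap.mulLeft K (φ p.2 p.1)) hBN
    (fun p => by
      rintro _ ⟨X, hX, rfl⟩
      exact mul_mem_invariantEnds (h.apply_mem_invariantEnds (Finset.disjoint_right.1 hNG p.1.2) _)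
        (hBN hX))
    (fun X₀ hX₀ X hX hsum p =>
      ⟨hX p, h.mem_compatibleMaps_bot_of_add_sum_eq_zero (hBG hX₀) (fun q => hBG (hX q)) hsum p⟩)
  have hZ := sum_finrank_add_finrank_le G B Z fun _ _ => inf_le_left
  have hZbot : B ⊓ G.inf Z = ⊥ := eq_bot_iff.2 <| inf_le_right.trans <|
    (Finset.inf_mono_fun fun j _ => inf_le_right).trans (finset_inf_compatibleMaps_bot_eq_bot hG).le
  rw [hZbot, finrank_bot, add_zero] at hZ
  have hsumZ : ∑ p : G × {u // u ≠ u₀}, finrank K (Z p.1) =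
      Fintype.card {u // u ≠ u₀} * ∑ j ∈ G, finrank K (Z j) := by
    rw [Fintype.sum_prod_type, ← Finset.sum_coe_sort G, Finset.mul_sum]
    exact Finset.sum_congr rfl fun j _ => by
      rw [← smul_eq_mul, ← Finset.card_univ, ← Finset.sum_const]
  rw [Fintype.card_prod, Fintype.card_coe, hsumZ] at hrel
  have hcard : Fintype.card ρ = Fintype.card {u // u ≠ u₀} + 1 := by
    rw [Fintype.card_subtype_compl, Fintype.card_subtype_eq]
    have := Fintype.card_pos_iff.2 ⟨u₀⟩
    omega
  rw [hcard]
  nlinarith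

theorem linearIndependent (h : IsInterferenceAligned W φ u₀) {j : κ} (hj : W j ≠ ⊥) :
    LinearIndependent K fun u => φ u j := by
  obtain ⟨v, hv, hv0⟩ := exists_mem_ne_zero_of_ne_bot hj
  refine LinearIndependent.of_comp (LinearMap.applyₗ v) ?_
  exact (h.iSupIndep_map j).linearIndependent _ (fun u => mem_map_of_mem hv)
    fun u => (map_ne_zero_iff _ (h.injective u j)).2 hv0

theorem card_le_finrank_invariantEnds [Fintype ρ] [FiniteDimensional K V]
    (h : IsInterferenceAligned W φ u₀) {N : Finset κ} {j : κ} (hjN : j ∉ N) (hj : W j ≠ ⊥) :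
    Fintype.card ρ ≤ finrank K (invariantEnds W N) := by
  have hli : LinearIndependent K fun u =>
      (⟨φ u j, h.apply_mem_invariantEnds hjN u⟩ : invariantEnds W N) :=
    LinearIndependent.of_comp (invariantEnds W N).subtype (h.linearIndependent hj)
  exact hli.fintype_card_le_finrank

theorem pow_mul_finrank_invariantEnds_le [Fintype ρ] [FiniteDimensional K V]
    (h : IsInterferenceAligned W φ u₀) {lam : ℕ}
    (hspan : ∀ T : Finset κ, T.card = lam → ⨆ i ∈ T, W i = ⊤) (t : ℕ) {N : Finset κ}
    (hN : t * lam ≤ N.card) :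
    Fintype.card ρ ^ t * finrank K (invariantEnds W N) ≤ finrank K V ^ 2 := by
  classical
  induction t generalizing N with
  | zero => simpa [pow_two, finrank_linearMap] using finrank_le (invariantEnds W N)
  | succ t ih =>
    obtain ⟨G, hGN, hG⟩ := Finset.exists_subset_card_eq (show lam ≤ N.card by nlinarith)
    have hstep := h.card_mul_finrank_invariantEnds_union_le (N := N \ G) Finset.sdiff_disjoint
      (hspan G hG)
    rw [Finset.sdiff_union_of_subset hGN] at hstep
    have hrest := ih (N := N \ G) (by
      rw [Finset.card_sdiff_of_subset hGN, hG]; rw [add_mul] at hN; omega)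
    calc Fintype.card ρ ^ (t + 1) * finrank K (invariantEnds W N)
        = Fintype.card ρ ^ t * (Fintype.card ρ * finrank K (invariantEnds W N)) := by ring
      _ ≤ Fintype.card ρ ^ t * finrank K (invariantEnds W (N \ G)) :=
        Nat.mul_le_mul_left _ hstep
      _ ≤ finrank K V ^ 2 := hrest

theorem pow_ceilDiv_le_finrank_sq [Fintype ρ] [Fintype κ] [Nonempty κ] [FiniteDimensional K V]
    (h : IsInterferenceAligned W φ u₀) (hW : ∀ j, W j ≠ ⊥) {lam : ℕ} (hlam : 0 < lam)
    (hspan : ∀ T : Finset κ, T.card = lam → ⨆ i ∈ T, W i = ⊤) :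
    Fintype.card ρ ^ (Fintype.card κ ⌈/⌉ lam) ≤ finrank K V ^ 2 := by
  classical
  obtain ⟨j⟩ := ‹Nonempty κ›
  set c := Fintype.card κ ⌈/⌉ lam
  have hκ := Fintype.card_pos (α := κ)
  have hc : Fintype.card κ ≤ lam * c := le_smul_ceilDiv hlam
  have hc1 : 1 ≤ c := Nat.pos_of_ne_zero fun h0 => by rw [h0, mul_zero] at hc; omega
  have hblocks : (c - 1) * lam ≤ (Finset.univ.erase j).card := by
    rw [Finset.card_erase_of_mem (Finset.mem_univ j), Finset.card_univ]
    by_contra! hlt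
    have := (ceilDiv_le_iff_le_mul hlam).2 (show Fintype.card κ ≤ lam * (c - 1) by
      rw [mul_comm]; omega)
    omega
  calc Fintype.card ρ ^ c = Fintype.card ρ ^ (c - 1) * Fintype.card ρ := by
        rw [← pow_succ, Nat.sub_add_cancel hc1]
    _ ≤ Fintype.card ρ ^ (c - 1) * finrank K (invariantEnds W (Finset.univ.erase j)) :=
      Nat.mul_le_mul_left _ (h.card_le_finrank_invariantEnds (Finset.notMem_erase j _) (hW j))
    _ ≤ finrank K V ^ 2 := h.pow_mul_finrank_invariantEnds_le hspan (c - 1) hblocks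

end IsInterferenceAligned

end InterferenceAlignment

theorem Matrix.span_range_mul_eq_map {K m n p : Type*} [Field K] [Fintype n]
    (A : Matrix m n K) (M : Matrix n p K) :
    span K (Set.range (A * M)) = (span K (Set.range A)).map M.vecMulLinear := by
  have hrows : A * M = fun a => M.vecMulLinear (A a) := by
    funext a j
    simp [Matrix.mul_apply, Matrix.vecMul, dotProduct]
  rw [map_span, hrows]
  exact congrArg (span K) (Set.range_comp _ A)

theorem le_two_mul_mul_logb_of_pow_ceilDiv_le {k r l lam : ℕ} (hr : 1 < r) (hlam : 0 < lam)
    (h : r ^ (k ⌈/⌉ lam) ≤ l ^ 2) : (k : ℝ) ≤ 2 * lam * Real.logb r l := by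
  have hl : 0 < l := Nat.pos_of_ne_zero fun h0 => by
    rw [h0] at h
    exact absurd h (by simp; omega)
  have hlogr : 0 < Real.log r := Real.log_pos (by exact_mod_cast hr)
  have hlog : ((k ⌈/⌉ lam : ℕ) : ℝ) * Real.log r ≤ 2 * Real.log l := by
    have := Real.log_le_log (by positivity) (by exact_mod_cast h : (r : ℝ) ^ (k ⌈/⌉ lam) ≤ l ^ 2)
    rwa [Real.log_pow, Real.log_pow, Nat.cast_ofNat] at this
  have hc : ((k ⌈/⌉ lam : ℕ) : ℝ) ≤ 2 * Real.logb r l := by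
    rw [Real.logb, mul_div_assoc', le_div_iff₀ hlogr]
    exact hlog
  calc (k : ℝ) ≤ lam * (k ⌈/⌉ lam : ℕ) := by exact_mod_cast le_smul_ceilDiv (b := k) hlam
    _ ≤ lam * (2 * Real.logb r l) := by gcongr
    _ = 2 * lam * Real.logb r l := by ring

theorem stmt_9 {𝔽 : Type*} [Field 𝔽] (k r l : ℕ)
    (hk : 0 < k) (hr : 2 ≤ r) (hl : 0 < l)
    (S : Fin k → Matrix (Fin (l / r)) (Fin l) 𝔽)
    (C : Fin r → Fin k → Matrix (Fin l) (Fin l) 𝔽)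
    (hCinv : ∀ u j, IsUnit (C u j))
    (hC1 : ∀ j, C ⟨0, by omega⟩ j = 1)
    (hIA1 : ∀ (i j : Fin k), j ≠ i → ∀ u : Fin r,
      Submodule.span 𝔽 (Set.range (S i * C u j)) = Submodule.span 𝔽 (Set.range (S i)))
    (hIA2 : ∀ i : Fin k, iSupIndep
      fun u : Fin r => Submodule.span 𝔽 (Set.range (S i * C u i)))
    (hIA3 : ∀ i : Fin k,
      (⨆ u : Fin r, Submodule.span 𝔽 (Set.range (S i * C u i))) = ⊤)
    (lam : ℕ) (hlam : 0 < lam)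
    (hspan : ∀ T : Finset (Fin k), T.card = lam →
      (⨆ i ∈ T, Submodule.span 𝔽 (Set.range (S i))) = ⊤) :
    r ^ (k ⌈/⌉ lam) ≤ l ^ 2 ∧ (k : ℝ) ≤ 2 * lam * Real.logb r l := by
  have hmap (i j u) : span 𝔽 (Set.range (S i * C u j)) =
      (span 𝔽 (Set.range (S i))).map (C u j).vecMulLinear :=
    Matrix.span_range_mul_eq_map _ _
  have hIA : IsInterferenceAligned (fun i => span 𝔽 (Set.range (S i)))
      (fun u j => (C u j).vecMulLinear) ⟨0, by omega⟩ :=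
    { injective := fun u j => Matrix.vecMul_injective_of_isUnit (hCinv u j)
      base_eq_one := fun j => LinearMap.ext fun v => by simp [hC1 j]
      map_le_of_ne := fun i j hji u => by rw [← hmap, hIA1 i j hji u]
      iSupIndep_map := fun i => by simpa only [hmap] using hIA2 i }
  have hW (i : Fin k) : span 𝔽 (Set.range (S i)) ≠ ⊥ := fun hbot => by
    have htop := hIA3 i
    simp only [hmap, hbot, Submodule.map_bot, iSup_bot] at htop
    have : NeZero l := ⟨hl.ne'⟩
    exact bot_ne_top htop
  have : Nonempty (Fin k) := ⟨⟨0, hk⟩⟩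
  have hpow := hIA.pow_ceilDiv_le_finrank_sq hW hlam hspan
  rw [Fintype.card_fin, Fintype.card_fin, finrank_fin_fun] at hpow
  exact ⟨hpow, le_two_mul_mul_logb_of_pow_ceilDiv_le (by omega) hlam hpow⟩
end

section
/- Under the interference-alignment hypotheses, set t = ⌈r²/l⌉. For every proper subset F ⊊ {1,…,k} with |F| = m: (a) if m ≤ t, then dim(Σ_{i∈F} rowSpace(S_i)) = m·(l/r); (b) if m = t + e with e ≥ 1, then dim(Σ_{i∈F} rowSpace(S_i)) ≥ l − (l/r)·(r−t)·((r−1)/r)^e, as an inequality of real numbers. -/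
/-!
Let `W` be the sum of the repair spaces of the nodes in `G` and `U = W + rowSpace(S_j)` for a
further node `j`. Interference alignment makes `W` invariant under every `C_{u,j}`, so the `r`
subspaces `U · C_{u,j}` all contain `W`, all have the dimension of `U`, and together span `𝔽^l`.
Hence `l - dim W ≤ r (dim U - dim W)`: adding a node closes at least a `1/r` fraction of the
remaining codimension. As long as `|G| · β < r` this forces `dim U = dim W + β`, which gives (a)
(`|G| · β < r` for `|G| < t` is exactly the choice `t = ⌈r² / l⌉`). From `|F| = t` on, iterating
`l - dim U ≤ (r - 1)/r · (l - dim W)` starting at codimension `l - tβ = β (r - t)` gives (b).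
-/

open Module Submodule Finset

section FiniteDimensional

variable {K V V' : Type*} [Field K] [AddCommGroup V] [Module K V] [AddCommGroup V'] [Module K V']

theorem finrank_biSup_add_card_mul_le [FiniteDimensional K V] {ι : Type*} (P : ι → Submodule K V)
    {W : Submodule K V} (hW : ∀ u, W ≤ P u) {b : ℕ} (hb : ∀ u, finrank K (P u) ≤ b)
    (s : Finset ι) :
    finrank K ↥(⨆ u ∈ s, P u) + #s * finrank K W ≤ #s * b + finrank K W := by
  classical
  suffices h : finrank K ↥(W ⊔ ⨆ u ∈ s, P u) + #s * finrank K W ≤ #s * b + finrank K W by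
    have := finrank_mono (le_sup_right : ⨆ u ∈ s, P u ≤ W ⊔ ⨆ u ∈ s, P u)
    omega
  induction s using Finset.induction_on with
  | empty =>
    rw [show ⨆ u ∈ (∅ : Finset ι), P u = ⊥ by simp, sup_bot_eq]
    simp
  | insert j s hj ih =>
    have hsup : W ⊔ ⨆ u ∈ insert j s, P u = P j ⊔ (W ⊔ ⨆ u ∈ s, P u) := by
      rw [Finset.iSup_insert, sup_left_comm]
    have hinf : finrank K W ≤ finrank K ↥(P j ⊓ (W ⊔ ⨆ u ∈ s, P u)) :=
      finrank_mono (le_inf (hW j) le_sup_left)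
    have := finrank_sup_add_finrank_inf_eq (P j) (W ⊔ ⨆ u ∈ s, P u)
    rw [hsup, card_insert_of_notMem hj, add_one_mul, add_one_mul]
    linarith [hb j]

theorem finrank_add_card_mul_le_of_iSup_map_eq_top [FiniteDimensional K V'] {κ : Type*}
    [Fintype κ] (f : κ → V →ₗ[K] V') (hf : ∀ u, Function.Injective (f u)) {U : Submodule K V}
    {W : Submodule K V'} (hW : ∀ u, W ≤ U.map (f u)) (hU : ⨆ u, U.map (f u) = ⊤) :
    finrank K V' + Fintype.card κ * finrank K W ≤ Fintype.card κ * finrank K U + finrank K W := by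
  have h := finrank_biSup_add_card_mul_le (fun u ↦ U.map (f u)) hW
    (fun u ↦ ((equivMapOfInjective (f u) (hf u) U).finrank_eq).ge) Finset.univ
  rwa [card_univ, show ⨆ u ∈ Finset.univ, U.map (f u) = ⊤ by simpa using hU, finrank_top] at h

end FiniteDimensional

theorem Matrix.span_range_mul {K m n p : Type*} [Field K] [Fintype n] (A : Matrix m n K)
    (B : Matrix n p K) :
    span K (Set.range (A * B)) = (span K (Set.range A)).map B.vecMulLinear := by
  rw [map_span]
  congr 1
  ext v
  constructor
  · rintro ⟨i, rfl⟩
    exact ⟨A i, ⟨i, rfl⟩, (mul_apply_eq_vecMul A B i).symm⟩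
  · rintro ⟨_, ⟨i, rfl⟩, rfl⟩
    exact ⟨i, mul_apply_eq_vecMul A B i⟩

section RepairSpace

variable {K ι κ m n : Type*} [Field K] [Fintype n]

def repairSpace (S : ι → Matrix m n K) (F : Finset ι) : Submodule K (n → K) :=
  ⨆ i ∈ F, span K (Set.range (S i))

theorem finrank_repairSpace_le [Fintype m] (S : ι → Matrix m n K) (F : Finset ι) :
    finrank K (repairSpace S F) ≤ #F * Fintype.card m := by
  have h := finrank_biSup_add_card_mul_le (fun i ↦ span K (Set.range (S i))) (fun _ ↦ bot_le)
    (fun i ↦ finrank_range_le_card (S i)) F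
  simp only [finrank_bot, mul_zero, add_zero] at h
  exact h

variable (S : ι → Matrix m n K) (C : κ → ι → Matrix n n K)

theorem repairSpace_map_eq_of_notMem
    (hC : ∀ i j, j ≠ i → ∀ u, span K (Set.range (S i * C u j)) = span K (Set.range (S i)))
    {G : Finset ι} {j : ι} (hj : j ∉ G) (u : κ) :
    (repairSpace S G).map (C u j).vecMulLinear = repairSpace S G := by
  simp only [repairSpace, Submodule.map_iSup, ← Matrix.span_range_mul]
  refine iSup_congr fun i ↦ iSup_congr fun hi ↦ hC i j ?_ u
  rintro rfl
  exact hj hi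

variable [DecidableEq n]

structure IsAlignedRepair : Prop where
  isUnit : ∀ u j, IsUnit (C u j)
  span_mul_eq : ∀ i j, j ≠ i → ∀ u, span K (Set.range (S i * C u j)) = span K (Set.range (S i))
  iSup_span_mul_eq_top : ∀ i, ⨆ u, span K (Set.range (S i * C u i)) = ⊤

variable {S C} [DecidableEq ι] [Fintype κ]

theorem IsAlignedRepair.card_add_mul_finrank_le_insert (hSC : IsAlignedRepair S C) {G : Finset ι} {j : ι} (hj : j ∉ G) :
    Fintype.card n + Fintype.card κ * finrank K (repairSpace S G) ≤
      Fintype.card κ * finrank K (repairSpace S (insert j G)) + finrank K (repairSpace S G) := by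
  have hmap (u : κ) : (repairSpace S (insert j G)).map (C u j).vecMulLinear =
      span K (Set.range (S j * C u j)) ⊔ repairSpace S G := by
    rw [repairSpace, Finset.iSup_insert, Submodule.map_sup, Matrix.span_range_mul,
      ← repairSpace, repairSpace_map_eq_of_notMem S C hSC.span_mul_eq hj]
  have h := finrank_add_card_mul_le_of_iSup_map_eq_top (fun u ↦ (C u j).vecMulLinear)
    (fun u ↦ Matrix.vecMul_injective_iff_isUnit.mpr (hSC.isUnit u j))
    (fun u ↦ (hmap u).ge.trans' le_sup_right)
    (eq_top_iff.mpr ((hSC.iSup_span_mul_eq_top j).ge.trans (iSup_mono fun u ↦ (hmap u).ge.trans' le_sup_left)))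
  rwa [finrank_fintype_fun_eq_card] at h

theorem IsAlignedRepair.finrank_repairSpace_eq [Fintype m] (hSC : IsAlignedRepair S C)
    (hn : Fintype.card n = Fintype.card κ * Fintype.card m) (F : Finset ι)
    (hF : #F * Fintype.card m < Fintype.card κ + Fintype.card m) :
    finrank K (repairSpace S F) = #F * Fintype.card m := by
  induction F using Finset.induction_on with
  | empty =>
    rw [show repairSpace S ∅ = ⊥ by simp [repairSpace], finrank_bot, card_empty, zero_mul]
  | insert j G hj ih =>
    rw [card_insert_of_notMem hj, add_one_mul] at hF ⊢
    have hG := ih (by linarith)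
    have hrec := hSC.card_add_mul_finrank_le_insert hj
    have hup := finrank_repairSpace_le S (insert j G)
    rw [card_insert_of_notMem hj, add_one_mul] at hup
    rw [hG, hn] at hrec
    refine le_antisymm hup ?_
    by_contra! hlt
    -- `d < (|G| + 1) β` gives `r (d + 1) ≤ r |G| β + l`, so the recurrence would force `r ≤ |G| β`.
    nlinarith

theorem IsAlignedRepair.le_finrank_repairSpace [Fintype m] [Nonempty κ]
    (hSC : IsAlignedRepair S C)
    (hn : Fintype.card n = Fintype.card κ * Fintype.card m) {t : ℕ}
    (ht : t * Fintype.card m < Fintype.card κ + Fintype.card m) (e : ℕ) (F : Finset ι)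
    (hF : #F = t + e) :
    (Fintype.card n : ℝ) - (Fintype.card n / Fintype.card κ) * (Fintype.card κ - t) *
      ((Fintype.card κ - 1) / Fintype.card κ) ^ e ≤ finrank K (repairSpace S F) := by
  have hr : (1 : ℝ) ≤ Fintype.card κ := by exact_mod_cast Fintype.card_pos
  have hr0 : (Fintype.card κ : ℝ) ≠ 0 := by positivity
  have hl : (Fintype.card n : ℝ) = Fintype.card κ * Fintype.card m := by exact_mod_cast hn
  set l : ℝ := (Fintype.card n : ℝ)
  set r : ℝ := (Fintype.card κ : ℝ)
  induction e generalizing F with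
  | zero =>
    rw [hSC.finrank_repairSpace_eq hn F (by rwa [hF]), hF, hl]
    refine le_of_eq ?_
    push_cast
    field_simp
    ring
  | succ e ih =>
    obtain ⟨j, G, hj, rfl, hG⟩ := card_eq_succ.mp hF
    have hrec : (Fintype.card n : ℝ) + Fintype.card κ * finrank K (repairSpace S G) ≤
        Fintype.card κ * finrank K (repairSpace S (insert j G)) + finrank K (repairSpace S G) := by
      exact_mod_cast hSC.card_add_mul_finrank_le_insert hj
    have hG := ih G hG
    calc l - l / r * (r - t) * ((r - 1) / r) ^ (e + 1)
        = (l + (r - 1) * (l - l / r * (r - t) * ((r - 1) / r) ^ e)) / r := by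
          rw [pow_succ]
          field_simp
          ring
      _ ≤ (l + (r - 1) * finrank K (repairSpace S G)) / r := by gcongr
      _ ≤ finrank K (repairSpace S (insert j G)) := by
          rw [div_le_iff₀ (by linarith)]
          linarith

end RepairSpace

theorem mul_lt_add_of_le_ceilDiv {r l s : ℕ} (hl : 0 < l) (hrl : r ∣ l)
    (hs : s ≤ r ^ 2 ⌈/⌉ l) : s * (l / r) < r + l / r := by
  obtain ⟨β, rfl⟩ := hrl
  have hr : 0 < r := Nat.pos_of_mul_pos_right hl
  rw [Nat.mul_div_cancel_left β hr]
  rcases s with _ | s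
  · omega
  have h : r * β * s < r ^ 2 := by
    by_contra! h
    have := (ceilDiv_le_iff_le_mul hl).2 h
    omega
  have h' : β * s < r := Nat.lt_of_mul_lt_mul_left (a := r) (by rw [← mul_assoc, ← sq]; exact h)
  rw [add_one_mul]
  linarith

theorem stmt_12 {𝔽 : Type*} [Field 𝔽] (k r l : ℕ)
    (hl : 0 < l) (hrl : r ∣ l)
    (S : Fin k → Matrix (Fin (l / r)) (Fin l) 𝔽)
    (C : Fin r → Fin k → Matrix (Fin l) (Fin l) 𝔽)
    (hCinv : ∀ u j, IsUnit (C u j))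
    (hIA1 : ∀ (i j : Fin k), j ≠ i → ∀ u : Fin r,
      Submodule.span 𝔽 (Set.range (S i * C u j)) = Submodule.span 𝔽 (Set.range (S i)))
    (hIA3 : ∀ i : Fin k,
      (⨆ u : Fin r, Submodule.span 𝔽 (Set.range (S i * C u i))) = ⊤)
    (t : ℕ) (ht : t = r ^ 2 ⌈/⌉ l)
    (F : Finset (Fin k)) (m : ℕ) (hm : F.card = m) :
    (m ≤ t →
      Module.finrank 𝔽 ↥(⨆ i ∈ F, Submodule.span 𝔽 (Set.range (S i))) = m * (l / r)) ∧
    (∀ e : ℕ, 1 ≤ e → m = t + e →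
      (l : ℝ) - ((l : ℝ) / r) * ((r : ℝ) - t) * (((r : ℝ) - 1) / r) ^ e ≤
        (Module.finrank 𝔽 ↥(⨆ i ∈ F, Submodule.span 𝔽 (Set.range (S i))) : ℝ)) := by
  subst hm ht
  have : NeZero r := ⟨(Nat.pos_of_dvd_of_pos hrl hl).ne'⟩
  have hn : Fintype.card (Fin l) = Fintype.card (Fin r) * Fintype.card (Fin (l / r)) := by
    simp [Nat.mul_div_cancel' hrl]
  have hβ (s : ℕ) (hs : s ≤ r ^ 2 ⌈/⌉ l) :
      s * Fintype.card (Fin (l / r)) < Fintype.card (Fin r) + Fintype.card (Fin (l / r)) := by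
    simpa using mul_lt_add_of_le_ceilDiv hl hrl hs
  have hSC : IsAlignedRepair S C := ⟨hCinv, hIA1, hIA3⟩
  refine ⟨fun hF ↦ ?_, fun e _ hF ↦ ?_⟩
  · have h := hSC.finrank_repairSpace_eq hn F (hβ _ hF)
    simp only [Fintype.card_fin] at h
    exact h
  · have h := hSC.le_finrank_repairSpace hn (hβ _ le_rfl) e F hF
    simp only [Fintype.card_fin] at h
    exact h
end
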